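/- Let a b : α with a ≠ b, and define word relations R, S : List α → Set (List α) by R w = {([a, b])^{|w|}, ([b, a])^{|w|}} and S w = {([a, b])^{|w|}}, where |w| = w.length and u^k denotes k-fold concatenation. Then, with respect to the Levenshtein metric, D(R, S) = 2. -/

import Mathlib

/-- `wpow u k` is the k-fold concatenation `u ++ u ++ ⋯ ++ u` (k copies). -/
def wpow {α : Type*} (u : List α) (k : ℕ) : List α := (List.replicate k u).flatten

/-- Levenshtein edit distance, removed from Mathlib (was `Mathlib.Data.List.EditDistance.Defs`);
reproduced here with its old definition. -/
structure Levenshtein.Cost (α β δ : Type*) where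
  /-- Cost to delete an element from a list. -/
  delete : α → δ
  /-- Cost in insert an element into a list. -/
  insert : β → δ
  /-- Cost to substitute one element for another in a list. -/
  substitute : α → β → δ

/-- The default cost structure: each insertion, deletion and substitution costs 1. -/
def Levenshtein.defaultCost {α : Type*} [DecidableEq α] : Levenshtein.Cost α α ℕ where
  delete _ := 1
  insert _ := 1
  substitute a b := if a = b then 0 else 1

/-- Inner loop of the Levenshtein algorithm. -/
def Levenshtein.impl {α β δ : Type*} [AddZeroClass δ] [Min δ]
    (C : Levenshtein.Cost α β δ) (xs : List α) (y : β)
    (d : {r : List δ // 0 < r.length}) : {r : List δ // 0 < r.length} :=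
  let ⟨ds, w⟩ := d
  xs.zip (ds.zip ds.tail) |>.foldr
    (init := ⟨[C.insert y + ds.getLast (List.ne_nil_of_length_pos w)], by simp⟩)
    (fun ⟨x, d₀, d₁⟩ ⟨r, w⟩ =>
      ⟨min (C.delete x + r[0]) (min (C.insert y + d₀) (C.substitute x y + d₁)) :: r, by simp⟩)

/-- Levenshtein distances from every suffix of `xs` to `ys`. -/
def suffixLevenshtein {α β δ : Type*} [AddZeroClass δ] [Min δ]
    (C : Levenshtein.Cost α β δ) (xs : List α) (ys : List β) :
    {r : List δ // 0 < r.length} :=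
  ys.foldr
    (Levenshtein.impl C xs)
    (xs.foldr (init := ⟨[0], by simp⟩) (fun a ⟨r, w⟩ => ⟨(C.delete a + r[0]) :: r, by simp⟩))

/-- The Levenshtein edit distance with cost structure `C`. -/
def levenshtein {α β δ : Type*} [AddZeroClass δ] [Min δ]
    (C : Levenshtein.Cost α β δ) (xs : List α) (ys : List β) : δ :=
  let ⟨r, w⟩ := suffixLevenshtein C xs ys
  r[0]

open scoped Classical

/-- The domain of a word relation. -/
def dom {A B : Type*} (R : List A → Set (List B)) : Set (List A) := {u | (R u).Nonempty}

/-- Directed distance between two sets of words. -/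
noncomputable def dirDist {B : Type*} (d : List B → List B → ℕ∞) (L L' : Set (List B)) : ℕ∞ :=
  ⨆ v ∈ L, ⨅ v' ∈ L', d v v'

/-- Hausdorff distance between two sets of words. -/
noncomputable def hausDist {B : Type*} (d : List B → List B → ℕ∞) (L L' : Set (List B)) : ℕ∞ :=
  max (dirDist d L L') (dirDist d L' L)

/-- Distance between two word relations. -/
noncomputable def relDist {A B : Type*} (d : List B → List B → ℕ∞)
    (R S : List A → Set (List B)) : ℕ∞ :=
  if dom R = dom S then ⨆ u ∈ dom R, hausDist d (R u) (S u) else ⊤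

/-! `R u` adds `(ba)ⁿ` to `S u = {(ab)ⁿ}`, where `n = |u|`, so `D(R, S)` is the supremum over `n`
of `d((ba)ⁿ, (ab)ⁿ)`. For `w = (ab)ⁿa` we have `(ba)ⁿ⁺¹ = b·w` and `(ab)ⁿ⁺¹ = w·b`, so deleting
the leading `b` and appending it again shows that this distance is at most 2; it is 2 at `n = 1`. -/

namespace Levenshtein

variable {α β δ : Type*} [AddZeroClass δ] [Min δ] (C : Cost α β δ)

theorem impl_cons_val (x : α) (xs : List α) (y : β) (d : δ) (ds : List δ) (h : 0 < ds.length) :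
    (impl C (x :: xs) y ⟨d :: ds, by simp⟩).1 =
      min (C.delete x + (impl C xs y ⟨ds, h⟩).1[0]'(impl C xs y _).2)
        (min (C.insert y + d) (C.substitute x y + ds[0])) :: (impl C xs y ⟨ds, h⟩).1 :=
  match ds, h with | _ :: _, _ => rfl

end Levenshtein

section
variable {α β δ : Type*} [AddZeroClass δ] [Min δ] (C : Levenshtein.Cost α β δ)

theorem suffixLevenshtein_cons_right (xs : List α) (y : β) (ys : List β) :
    suffixLevenshtein C xs (y :: ys) = Levenshtein.impl C xs y (suffixLevenshtein C xs ys) :=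
  rfl

theorem levenshtein_eq_head_suffixLevenshtein (xs : List α) (ys : List β) :
    levenshtein C xs ys = (suffixLevenshtein C xs ys).1[0]'(suffixLevenshtein C xs ys).2 :=
  rfl

theorem suffixLevenshtein_nil_left (ys : List β) :
    suffixLevenshtein C [] ys = ⟨[levenshtein C [] ys], by simp⟩ := by
  induction ys with
  | nil => rfl
  | cons y ys ih =>
    rw [levenshtein_eq_head_suffixLevenshtein, suffixLevenshtein_cons_right, ih]
    rfl

theorem suffixLevenshtein_cons_left (x : α) (xs : List α) (ys : List β) :
    suffixLevenshtein C (x :: xs) ys =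
      ⟨levenshtein C (x :: xs) ys :: (suffixLevenshtein C xs ys).1, by simp⟩ := by
  induction ys with
  | nil => rfl
  | cons y ys ih =>
    apply Subtype.ext
    rw [levenshtein_eq_head_suffixLevenshtein, suffixLevenshtein_cons_right,
      suffixLevenshtein_cons_right]
    simp only [ih, Levenshtein.impl_cons_val _ _ _ _ _ _ (suffixLevenshtein C xs ys).2]
    rfl

@[simp]
theorem levenshtein_nil_nil : levenshtein C [] [] = 0 :=
  rfl

@[simp]
theorem levenshtein_nil_cons (y : β) (ys : List β) :
    levenshtein C [] (y :: ys) = C.insert y + levenshtein C [] ys := by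
  rw [levenshtein_eq_head_suffixLevenshtein, suffixLevenshtein_cons_right,
    suffixLevenshtein_nil_left]
  rfl

@[simp]
theorem levenshtein_cons_nil (x : α) (xs : List α) :
    levenshtein C (x :: xs) [] = C.delete x + levenshtein C xs [] :=
  rfl

@[simp]
theorem levenshtein_cons_cons (x : α) (xs : List α) (y : β) (ys : List β) :
    levenshtein C (x :: xs) (y :: ys) =
      min (C.delete x + levenshtein C xs (y :: ys))
        (min (C.insert y + levenshtein C (x :: xs) ys)
          (C.substitute x y + levenshtein C xs ys)) := by
  rw [levenshtein_eq_head_suffixLevenshtein, suffixLevenshtein_cons_right,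
    suffixLevenshtein_cons_left]
  simp only [Levenshtein.impl_cons_val _ _ _ _ _ _ (suffixLevenshtein C xs ys).2]
  rfl

end

theorem wpow_succ' {α : Type*} (u : List α) (n : ℕ) : wpow u (n + 1) = wpow u n ++ u := by
  simp [wpow, List.replicate_succ']

theorem wpow_cons_succ {α : Type*} (x : α) (u : List α) (n : ℕ) :
    wpow (x :: u) (n + 1) = x :: (wpow (u ++ [x]) n ++ u) := by
  induction n with
  | zero => simp [wpow]
  | succ n ih => rw [wpow_succ', ih, wpow_succ']; simp

section DefaultCost

variable {α : Type*} [DecidableEq α]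

local notation "lev" => levenshtein Levenshtein.defaultCost

@[simp]
theorem Levenshtein.defaultCost_delete (x : α) : Levenshtein.defaultCost.delete x = 1 :=
  rfl

@[simp]
theorem Levenshtein.defaultCost_insert (x : α) : Levenshtein.defaultCost.insert x = 1 :=
  rfl

@[simp]
theorem Levenshtein.defaultCost_substitute (x y : α) :
    Levenshtein.defaultCost.substitute x y = if x = y then 0 else 1 :=
  rfl

theorem levenshtein_defaultCost_self (s : List α) : lev s s = 0 := by
  induction s with
  | nil => rfl
  | cons x s ih => simp [ih]

theorem levenshtein_defaultCost_nil_left (t : List α) : lev [] t = t.length := by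
  induction t with
  | nil => rfl
  | cons y t ih => simp [ih, add_comm]

theorem levenshtein_defaultCost_le_append (s t : List α) : lev s (s ++ t) ≤ t.length := by
  induction s with
  | nil => exact (levenshtein_defaultCost_nil_left t).le
  | cons x s ih => simpa using Or.inr (Or.inr ih)

theorem levenshtein_defaultCost_cons_left_le (x : α) (s t : List α) :
    lev (x :: s) t ≤ lev s t + 1 := by
  cases t with
  | nil => simp [add_comm]
  | cons y t => simp [add_comm]

theorem levenshtein_defaultCost_cons_append_singleton_le (x : α) (s : List α) :
    lev (x :: s) (s ++ [x]) ≤ 2 :=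
  calc lev (x :: s) (s ++ [x]) ≤ lev s (s ++ [x]) + 1 := levenshtein_defaultCost_cons_left_le ..
    _ ≤ 1 + 1 := by gcongr; exact levenshtein_defaultCost_le_append s [x]

theorem levenshtein_defaultCost_swap_pair {a b : α} (hab : a ≠ b) : lev [b, a] [a, b] = 2 := by
  simp [hab, hab.symm]

theorem levenshtein_defaultCost_wpow_swap_le (a b : α) (n : ℕ) :
    lev (wpow [b, a] n) (wpow [a, b] n) ≤ 2 := by
  cases n with
  | zero => simp [wpow]
  | succ n =>
    rw [wpow_cons_succ b [a], wpow_succ' [a, b]]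
    simpa using levenshtein_defaultCost_cons_append_singleton_le b (wpow [a, b] n ++ [a])

end DefaultCost

theorem hausDist_pair_singleton {B : Type*} {d : List B → List B → ℕ∞} {x y : List B}
    (hx : d x x = 0) : hausDist d {x, y} {x} = d y x := by
  simp only [hausDist, dirDist, iSup_insert, iSup_singleton, iInf_insert, iInf_singleton, hx]
  simp

theorem relDist_eq_iSup_of_nonempty {A B : Type*} (d : List B → List B → ℕ∞)
    {R S : List A → Set (List B)} (hR : ∀ u, (R u).Nonempty) (hS : ∀ u, (S u).Nonempty) :
    relDist d R S = ⨆ u, hausDist d (R u) (S u) := by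
  have hR' : dom R = Set.univ := Set.eq_univ_of_forall hR
  have hS' : dom S = Set.univ := Set.eq_univ_of_forall hS
  simp [relDist, hR', hS']

theorem stmt_13 {α : Type*} [DecidableEq α] (a b : α) (hab : a ≠ b)
    (R S : List α → Set (List α))
    (hR : ∀ w, R w = {wpow [a, b] w.length, wpow [b, a] w.length})
    (hS : ∀ w, S w = {wpow [a, b] w.length}) :
    relDist (fun v v' => ((levenshtein Levenshtein.defaultCost v v' : ℕ) : ℕ∞)) R S = 2 := by
  have hH : ∀ u, hausDist (fun v v' => ((levenshtein Levenshtein.defaultCost v v' : ℕ) : ℕ∞))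
      (R u) (S u) =
        levenshtein Levenshtein.defaultCost (wpow [b, a] u.length) (wpow [a, b] u.length) :=
    fun u => by
      rw [hR, hS, hausDist_pair_singleton]
      simp [levenshtein_defaultCost_self]
  rw [relDist_eq_iSup_of_nonempty _ (fun u => by simp [hR]) (fun u => by simp [hS])]
  simp only [hH]
  apply le_antisymm
  · exact iSup_le fun u => by exact_mod_cast levenshtein_defaultCost_wpow_swap_le a b u.length
  · refine le_iSup_of_le [a] ?_
    simp [wpow, levenshtein_defaultCost_swap_pair hab]
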